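/- For all positive real parameters κ, θ, σ, the function x ↦ x·π(x) is integrable on [0,∞) and ∫₀^∞ x · π(x) dx = θ + (σ/√(2κ)) · φ(√(2κ)θ/σ) / (1 − Φ(−√(2κ)θ/σ)). -/

import Mathlib

/-!
With `a = √(2κ)/σ`, the density is `π(x) = a φ(a(x-θ)) / (1 - Φ(-aθ))`. Since `φ' (y) = -y φ(y)`, the
function `x ↦ θ Φ(a(x-θ)) - φ(a(x-θ))/a` is an antiderivative of `x ↦ x · a φ(a(x-θ))` which tends
to `θ` at `+∞`, so the integral over `(0, ∞)` is `θ (1 - Φ(-aθ)) + φ(aθ)/a`.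
-/

open MeasureTheory Real

/-- The standard normal probability density function φ. -/
noncomputable def stdPhi (x : ℝ) : ℝ := Real.exp (-x ^ 2 / 2) / Real.sqrt (2 * Real.pi)

/-- The standard normal cumulative distribution function Φ. -/
noncomputable def stdCDF (x : ℝ) : ℝ := ∫ u in Set.Iic x, stdPhi u

/-- The stationary density of the reflected Ornstein–Uhlenbeck process. -/
noncomputable def rouPi (κ θ σ x : ℝ) : ℝ :=
  (Real.sqrt (2 * κ) / σ) * stdPhi (Real.sqrt (2 * κ) * (x - θ) / σ) /
    (1 - stdCDF (-(Real.sqrt (2 * κ) * θ / σ)))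

open Set Filter Topology

lemma stdPhi_eq (x : ℝ) : stdPhi x = (√(2 * π))⁻¹ * exp (-(1 / 2) * x ^ 2) := by
  rw [stdPhi, div_eq_inv_mul]
  ring_nf

lemma stdPhi_pos (x : ℝ) : 0 < stdPhi x := by
  rw [stdPhi_eq]
  positivity

lemma stdPhi_neg (x : ℝ) : stdPhi (-x) = stdPhi x := by
  simp [stdPhi]

lemma continuous_stdPhi : Continuous stdPhi := by
  unfold stdPhi
  fun_prop

lemma integrable_stdPhi : Integrable stdPhi := by
  simp_rw [funext stdPhi_eq]
  exact (integrable_exp_neg_mul_sq (by norm_num)).const_mul _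

lemma integrable_mul_stdPhi : Integrable fun x => x * stdPhi x := by
  simp_rw [stdPhi_eq, mul_left_comm _ (√(2 * π))⁻¹]
  exact (integrable_mul_exp_neg_mul_sq (by norm_num)).const_mul _

lemma integral_stdPhi : ∫ x, stdPhi x = 1 := by
  simp_rw [stdPhi_eq, integral_const_mul, integral_gaussian]
  rw [show π / (1 / 2) = 2 * π by ring, inv_mul_cancel₀ (by positivity)]

lemma hasDerivAt_stdPhi (x : ℝ) : HasDerivAt stdPhi (-x * stdPhi x) x := by
  have h : HasDerivAt (fun y : ℝ => -y ^ 2 / 2) (-x) x :=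
    ((hasDerivAt_pow 2 x).neg.div_const 2).congr_deriv (by norm_num; ring)
  refine (h.exp.div_const √(2 * π)).congr_deriv ?_
  rw [stdPhi]
  ring

lemma tendsto_stdPhi_atTop : Tendsto stdPhi atTop (𝓝 0) := by
  have h : Tendsto (fun x : ℝ => -x ^ 2 / 2) atTop atBot :=
    (tendsto_neg_atBot_iff.2 (tendsto_pow_atTop two_ne_zero)).atBot_div_const two_pos
  rw [← zero_div √(2 * π)]
  exact (tendsto_exp_atBot.comp h).div_const _

lemma stdCDF_eq_add_intervalIntegral (t : ℝ) :
    stdCDF t = stdCDF 0 + ∫ u in (0 : ℝ)..t, stdPhi u := by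
  rw [stdCDF, stdCDF, ← intervalIntegral.integral_Iic_sub_Iic
    integrable_stdPhi.integrableOn integrable_stdPhi.integrableOn]
  ring

lemma hasDerivAt_stdCDF (x : ℝ) : HasDerivAt stdCDF (stdPhi x) x := by
  rw [funext stdCDF_eq_add_intervalIntegral, ← zero_add (stdPhi x)]
  exact (hasDerivAt_const x _).add <| intervalIntegral.integral_hasDerivAt_right
    integrable_stdPhi.intervalIntegrable
    continuous_stdPhi.stronglyMeasurable.stronglyMeasurableAtFilter continuous_stdPhi.continuousAt

lemma tendsto_stdCDF_atTop : Tendsto stdCDF atTop (𝓝 1) := by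
  have h := tendsto_setIntegral_of_monotone (μ := volume) (f := stdPhi)
    (fun t => measurableSet_Iic) (fun _ _ => Iic_subset_Iic.2)
    (by rw [iUnion_Iic]; exact integrable_stdPhi.integrableOn)
  rwa [iUnion_Iic, setIntegral_univ, integral_stdPhi] at h

lemma stdCDF_add_integral_Ioi (x : ℝ) : stdCDF x + ∫ u in Ioi x, stdPhi u = 1 := by
  rw [stdCDF, intervalIntegral.integral_Iic_add_Ioi
    integrable_stdPhi.integrableOn integrable_stdPhi.integrableOn, integral_stdPhi]

lemma stdCDF_lt_one (x : ℝ) : stdCDF x < 1 := by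
  have hpos : 0 < ∫ u in Ioi x, stdPhi u := by
    have hsupp : Function.support stdPhi = univ := eq_univ_of_forall fun u => (stdPhi_pos u).ne'
    rw [setIntegral_pos_iff_support_of_nonneg_ae
      (Eventually.of_forall fun u => (stdPhi_pos u).le) integrable_stdPhi.integrableOn,
      hsupp, univ_inter]
    simp
  linarith [stdCDF_add_integral_Ioi x]

section Affine

variable {a : ℝ} (m : ℝ)

lemma integrable_mul_stdPhi_affine (ha : a ≠ 0) :
    Integrable fun x => x * (a * stdPhi (a * (x - m))) := by
  have hcentred : Integrable fun x => a * (x - m) * stdPhi (a * (x - m)) :=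
    (integrable_mul_stdPhi.comp_mul_left' ha).comp_sub_right m
  have hmean : Integrable fun x => m * (a * stdPhi (a * (x - m))) :=
    (((integrable_stdPhi.comp_mul_left' ha).comp_sub_right m).const_mul a).const_mul m
  refine (hcentred.add hmean).congr (Eventually.of_forall fun x => ?_)
  simp only [Pi.add_apply]
  ring

lemma hasDerivAt_mul_stdCDF_sub_stdPhi_div (ha : a ≠ 0) (x : ℝ) :
    HasDerivAt (fun y => m * stdCDF (a * (y - m)) - stdPhi (a * (y - m)) / a)
      (x * (a * stdPhi (a * (x - m)))) x := by
  have hlin : HasDerivAt (fun y => a * (y - m)) a x := by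
    simpa using ((hasDerivAt_id x).sub_const m).const_mul a
  have hCDF := ((hasDerivAt_stdCDF _).comp x hlin).const_mul m
  have hPhi := ((hasDerivAt_stdPhi _).comp x hlin).div_const a
  refine (hCDF.sub hPhi).congr_deriv ?_
  field_simp
  ring

lemma integral_Ioi_mul_stdPhi_affine (ha : 0 < a) (c : ℝ) :
    ∫ x in Ioi c, x * (a * stdPhi (a * (x - m))) =
      m * (1 - stdCDF (a * (c - m))) + stdPhi (a * (c - m)) / a := by
  have hlin : Tendsto (fun x => a * (x - m)) atTop atTop :=
    (tendsto_atTop_add_const_right _ (-m) tendsto_id).const_mul_atTop ha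
  have hlim : Tendsto (fun y => m * stdCDF (a * (y - m)) - stdPhi (a * (y - m)) / a)
      atTop (𝓝 m) := by
    simpa using ((tendsto_stdCDF_atTop.comp hlin).const_mul m).sub
      ((tendsto_stdPhi_atTop.comp hlin).div_const a)
  rw [integral_Ioi_of_hasDerivAt_of_tendsto'
    (fun x _ => hasDerivAt_mul_stdCDF_sub_stdPhi_div m ha.ne' x)
    (integrable_mul_stdPhi_affine m ha.ne').integrableOn hlim]
  ring

end Affine

lemma rouPi_eq (κ θ σ x : ℝ) :
    rouPi κ θ σ x = √(2 * κ) / σ * stdPhi (√(2 * κ) / σ * (x - θ)) /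
      (1 - stdCDF (-(√(2 * κ) / σ * θ))) := by
  simp only [rouPi, div_mul_eq_mul_div]

theorem rouPi_first_moment_general (κ θ σ : ℝ) (hκ : 0 < κ) (hσ : 0 < σ) :
    MeasureTheory.IntegrableOn (fun x : ℝ => x * rouPi κ θ σ x) (Set.Ioi 0) ∧
      (∫ x in Set.Ioi (0 : ℝ), x * rouPi κ θ σ x) =
        θ + (σ / Real.sqrt (2 * κ)) * stdPhi (Real.sqrt (2 * κ) * θ / σ) /
          (1 - stdCDF (-(Real.sqrt (2 * κ) * θ / σ))) := by
  set a := √(2 * κ) / σ with ha_def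
  have ha : 0 < a := by positivity
  have hC : 1 - stdCDF (-(a * θ)) ≠ 0 := (sub_pos.2 (stdCDF_lt_one _)).ne'
  have hfun : (fun x => x * rouPi κ θ σ x) =
      fun x => x * (a * stdPhi (a * (x - θ))) / (1 - stdCDF (-(a * θ))) :=
    funext fun x => by rw [rouPi_eq, mul_div_assoc']
  have hσ_div : σ / √(2 * κ) = a⁻¹ := (inv_div _ _).symm
  rw [hfun, mul_div_right_comm _ θ, ← ha_def, hσ_div]
  refine ⟨(integrable_mul_stdPhi_affine θ ha.ne').integrableOn.div_const _, ?_⟩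
  rw [integral_div, integral_Ioi_mul_stdPhi_affine θ ha, zero_sub, mul_neg, stdPhi_neg,
    add_div, mul_div_cancel_right₀ _ hC, div_eq_inv_mul (stdPhi _)]

/-- For all positive parameters κ, θ, σ, the first stationary moment:
x ↦ x·π(x) is integrable on [0,∞) and
∫₀^∞ x π(x) dx = θ + (σ/√(2κ)) φ(√(2κ)θ/σ)/(1 − Φ(−√(2κ)θ/σ)). -/
theorem rouPi_first_moment (κ θ σ : ℝ) (hκ : 0 < κ) (hθ : 0 < θ) (hσ : 0 < σ) :
    MeasureTheory.IntegrableOn (fun x : ℝ => x * rouPi κ θ σ x) (Set.Ioi 0) ∧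
      (∫ x in Set.Ioi (0 : ℝ), x * rouPi κ θ σ x) =
        θ + (σ / Real.sqrt (2 * κ)) * stdPhi (Real.sqrt (2 * κ) * θ / σ) /
          (1 - stdCDF (-(Real.sqrt (2 * κ) * θ / σ))) :=
  rouPi_first_moment_general κ θ σ hκ hσ
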